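/- arXiv:2112.14394 — 7 statements merged into one kernel-verified Lean document; each statement's English description precedes it below -/
import Mathlib

section
/- Let α_i, α_j, α_k be real numbers and suppose a, b, c are real numbers, not all zero, satisfying a + b + c = 0 together with the three equations (α_j − α_i)·a + α_k·b − α_k·c = 0, (α_k − α_j)·c + α_i·a − α_i·b = 0, and (α_i − α_k)·b + α_j·c − α_j·a = 0. Then α_i² + α_j² + α_k² = 2(α_i·α_j + α_j·α_k + α_k·α_i). Moreover, if ε ∈ {1,−1} and η_i, η_j, η_k are real numbers with α_s = ε·η_s² for s ∈ {i,j,k}, η_i + η_j + η_k = 0, and at most one of η_i, η_j, η_k equal to zero, then there exists a nonzero real μ with (a, b, c) = μ·(η_k, η_j, η_i). -/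
/-!
Substituting `c = -a - b`, the equations for `i` and `k` form the homogeneous `2 × 2` system
`p a + 2αₖ b = 0`, `-2αⱼ a - p b = 0` with `p = αⱼ + αₖ - αᵢ`. Since `(a, b) ≠ 0`, its
determinant `4αⱼαₖ - p²` vanishes, which is the stated relation. When `α_s = ε η_s²` and
`ηᵢ = -ηⱼ - ηₖ`, one has `p = -2εηⱼηₖ`, and the two equations become
`2εηₖ (ηₖ b - ηⱼ a) = 0` and `2εηⱼ (ηₖ b - ηⱼ a) = 0`, so `(a, b)` is proportional to `(ηₖ, ηⱼ)`.
-/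

theorem mul_sub_mul_eq_zero_of_ne_zero_solution {R : Type*} [CommRing R] [IsDomain R]
    {p q r s x y : R}
    (h₁ : p * x + q * y = 0) (h₂ : r * x + s * y = 0) (hxy : x ≠ 0 ∨ y ≠ 0) :
    p * s - q * r = 0 := by
  rw [← Matrix.det_fin_two_of]
  refine Matrix.exists_mulVec_eq_zero_iff.1 ⟨![x, y], ?_, ?_⟩
  · intro h
    rcases hxy with hx | hy
    · exact hx (congrFun h 0)
    · exact hy (congrFun h 1)
  · ext i
    fin_cases i <;> simp [Matrix.mulVec, h₁, h₂]

theorem exists_eq_mul_of_mul_eq_mul {K : Type*} [Field K] {u v x y : K}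
    (huv : u ≠ 0 ∨ v ≠ 0) (h : u * y = v * x) : ∃ μ, x = μ * u ∧ y = μ * v := by
  rcases huv with hu | hv
  · refine ⟨x / u, by field_simp, ?_⟩
    field_simp
    linear_combination h
  · refine ⟨y / v, ?_, by field_simp⟩
    field_simp
    linear_combination -h

theorem stmt1_general (αi αj αk a b c : ℝ)
    (hne : ¬(a = 0 ∧ b = 0 ∧ c = 0))
    (hsum : a + b + c = 0)
    (h1 : (αj - αi) * a + αk * b - αk * c = 0)
    (h3 : (αi - αk) * b + αj * c - αj * a = 0) :
    αi ^ 2 + αj ^ 2 + αk ^ 2 = 2 * (αi * αj + αj * αk + αk * αi) ∧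
    ∀ ε ηi ηj ηk : ℝ, (ε = 1 ∨ ε = -1) →
      αi = ε * ηi ^ 2 → αj = ε * ηj ^ 2 → αk = ε * ηk ^ 2 →
      ηi + ηj + ηk = 0 →
      ¬(ηi = 0 ∧ ηj = 0) → ¬(ηj = 0 ∧ ηk = 0) → ¬(ηi = 0 ∧ ηk = 0) →
      ∃ μ : ℝ, μ ≠ 0 ∧ a = μ * ηk ∧ b = μ * ηj ∧ c = μ * ηi := by
  have hab : a ≠ 0 ∨ b ≠ 0 := by
    by_contra! h
    exact hne ⟨h.1, h.2, by linear_combination hsum - h.1 - h.2⟩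
  have e1 : (αj + αk - αi) * a + 2 * αk * b = 0 := by linear_combination h1 + αk * hsum
  have e3 : -2 * αj * a + (αi - αj - αk) * b = 0 := by linear_combination h3 - αj * hsum
  refine ⟨by linear_combination -mul_sub_mul_eq_zero_of_ne_zero_solution e1 e3 hab, ?_⟩
  rintro ε ηi ηj ηk hε rfl rfl rfl hη - hjk -
  obtain rfl : ηi = -ηj - ηk := by linear_combination hη
  have h2ε : 2 * ε ≠ 0 := by rcases hε with rfl | rfl <;> norm_num
  have hk : ηk * (ηk * b - ηj * a) = 0 :=
    mul_left_cancel₀ h2ε (by linear_combination e1)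
  have hj : ηj * (ηk * b - ηj * a) = 0 :=
    mul_left_cancel₀ h2ε (by linear_combination e3)
  have hcross : ηk * b = ηj * a := by
    rw [← sub_eq_zero]
    rcases not_and_or.1 hjk with hj0 | hk0
    · exact (mul_eq_zero.1 hj).resolve_left hj0
    · exact (mul_eq_zero.1 hk).resolve_left hk0
  obtain ⟨μ, rfl, rfl⟩ := exists_eq_mul_of_mul_eq_mul (not_and_or.1 hjk).symm hcross
  refine ⟨μ, ?_, rfl, rfl, by linear_combination hsum⟩
  rintro rfl
  exact hne ⟨zero_mul _, zero_mul _, by linear_combination hsum⟩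

/-- If `a, b, c` are not all zero, satisfy `a + b + c = 0` and the three
linear equations coming from `R(X,Y)·R = 0`, then the eigenvalues `αᵢ, αⱼ, αₖ` satisfy
`αᵢ² + αⱼ² + αₖ² = 2(αᵢαⱼ + αⱼαₖ + αₖαᵢ)`.  Moreover, if `ε = ±1` and `η`'s with
`α_s = ε η_s²`, `ηᵢ + ηⱼ + ηₖ = 0` and at most one `η` zero, then `(a,b,c)` is a nonzero
multiple of `(ηₖ, ηⱼ, ηᵢ)`. -/
theorem stmt1 (αi αj αk a b c : ℝ)
    (hne : ¬(a = 0 ∧ b = 0 ∧ c = 0))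
    (hsum : a + b + c = 0)
    (h1 : (αj - αi) * a + αk * b - αk * c = 0)
    (h2 : (αk - αj) * c + αi * a - αi * b = 0)
    (h3 : (αi - αk) * b + αj * c - αj * a = 0) :
    αi ^ 2 + αj ^ 2 + αk ^ 2 = 2 * (αi * αj + αj * αk + αk * αi) ∧
    ∀ ε ηi ηj ηk : ℝ, (ε = 1 ∨ ε = -1) →
      αi = ε * ηi ^ 2 → αj = ε * ηj ^ 2 → αk = ε * ηk ^ 2 →
      ηi + ηj + ηk = 0 →
      ¬(ηi = 0 ∧ ηj = 0) → ¬(ηj = 0 ∧ ηk = 0) → ¬(ηi = 0 ∧ ηk = 0) →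
      ∃ μ : ℝ, μ ≠ 0 ∧ a = μ * ηk ∧ b = μ * ηj ∧ c = μ * ηi :=
  stmt1_general αi αj αk a b c hne hsum h1 h3
end

section
/- Let σ be a finite set of distinct nonzero real numbers, let c : σ → ℝ, let r ∈ ℝ, and let ε > 0 be such that 1 − α·t > 0 for every α ∈ σ and every t ∈ (0, ε). If r + Σ_{α ∈ σ} c(α)·√(1 − α·t) = 0 for all t ∈ (0, ε), then r = 0 and c(α) = 0 for every α ∈ σ. -/
/-!
Treat `r` as the coefficient of `α = 0`, so the identity reads `∑ d(α) (1 - α t)^(1/2) = 0` over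
the distinct nodes `insert 0 σ`. Differentiating `n` times gives
`∑ d(α) α^n (1 - α t)^(1/2 - n) = 0` (the exponent `1/2 - k` never vanishes), and letting `t → 0⁺`
gives the moments `∑ d(α) α^n = 0` for every `n`. An invertible Vandermonde matrix then forces
`d = 0`.
-/

open Real Filter Topology

theorem Finset.eq_zero_of_forall_sum_mul_pow_eq_zero {R : Type*} [CommRing R] [IsDomain R]
    {s : Finset R} {d : R → R} (h : ∀ n : ℕ, ∑ α ∈ s, d α * α ^ n = 0) :
    ∀ β ∈ s, d β = 0 := by
  intro β hβ
  let e := s.equivFin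
  have hv := Matrix.eq_zero_of_forall_pow_sum_mul_pow_eq_zero
    (f := fun j => (e.symm j : R)) (v := fun j => d (e.symm j))
    (Subtype.val_injective.comp e.symm.injective) fun n => by
      rw [← h n, ← s.sum_coe_sort]
      exact Fintype.sum_equiv e.symm _ _ fun _ => rfl
  simpa using congrFun hv (e ⟨β, hβ⟩)

section RpowSums

variable {ι : Type*} {s : Finset ι} {a : ι → ℝ}

theorem sum_mul_rpow_sub_one_eq_zero {U : Set ℝ} (d : ι → ℝ) (hU : IsOpen U)
    (hbase : ∀ i ∈ s, ∀ t ∈ U, 1 - a i * t ≠ 0) {p : ℝ} (hp : p ≠ 0)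
    (h : ∀ t ∈ U, ∑ i ∈ s, d i * (1 - a i * t) ^ p = 0) :
    ∀ t ∈ U, ∑ i ∈ s, d i * a i * (1 - a i * t) ^ (p - 1) = 0 := by
  intro t ht
  have hderiv : HasDerivAt (fun t => ∑ i ∈ s, d i * (1 - a i * t) ^ p)
      (∑ i ∈ s, d i * (-a i * p * (1 - a i * t) ^ (p - 1))) t :=
    HasDerivAt.fun_sum fun i hi =>
      (((hasDerivAt_id t).const_mul (a i)).const_sub 1 |>.rpow_const
        (Or.inl (hbase i hi t ht))).const_mul (d i) |>.congr_deriv (by simp)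
  have hzero : HasDerivAt (fun t => ∑ i ∈ s, d i * (1 - a i * t) ^ p) 0 t :=
    (hasDerivAt_const t 0).congr_of_eventuallyEq <| eventually_of_mem (hU.mem_nhds ht) h
  have hscaled : -p * ∑ i ∈ s, d i * a i * (1 - a i * t) ^ (p - 1) = 0 := by
    rw [← hderiv.unique hzero, Finset.mul_sum]
    exact Finset.sum_congr rfl fun i _ => by ring
  exact (mul_eq_zero.mp hscaled).resolve_left (neg_ne_zero.mpr hp)

theorem sum_mul_pow_mul_rpow_sub_eq_zero {U : Set ℝ} (d : ι → ℝ) (hU : IsOpen U)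
    (hbase : ∀ i ∈ s, ∀ t ∈ U, 1 - a i * t ≠ 0) {p : ℝ} (hp : ∀ k : ℕ, p ≠ k)
    (h : ∀ t ∈ U, ∑ i ∈ s, d i * (1 - a i * t) ^ p = 0) (n : ℕ) :
    ∀ t ∈ U, ∑ i ∈ s, d i * a i ^ n * (1 - a i * t) ^ (p - n) = 0 := by
  induction n with
  | zero => simpa using h
  | succ n ih =>
    intro t ht
    rw [← sum_mul_rpow_sub_one_eq_zero _ hU hbase (sub_ne_zero.mpr (hp n)) ih t ht]
    exact Finset.sum_congr rfl fun i _ => by push_cast; ring_nf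

theorem sum_eq_zero_of_sum_mul_rpow_eq_zero_on_Ioo (d : ι → ℝ) {ε : ℝ} (hε : 0 < ε) {p : ℝ}
    (h : ∀ t ∈ Set.Ioo 0 ε, ∑ i ∈ s, d i * (1 - a i * t) ^ p = 0) :
    ∑ i ∈ s, d i = 0 := by
  have hcont : ContinuousAt (fun t => ∑ i ∈ s, d i * (1 - a i * t) ^ p) 0 :=
    tendsto_finsetSum s fun i _ => continuousAt_const.mul <|
      (continuousAt_const.sub (continuousAt_const.mul continuousAt_id)).rpow_const
        (Or.inl (by simp))
  have hlim : Tendsto (fun t => ∑ i ∈ s, d i * (1 - a i * t) ^ p) (𝓝[>] (0 : ℝ))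
      (𝓝 (∑ i ∈ s, d i)) := by
    simpa using hcont.tendsto.mono_left nhdsWithin_le_nhds
  exact tendsto_nhds_unique_of_eventuallyEq hlim tendsto_const_nhds <|
    eventually_of_mem (Ioo_mem_nhdsGT hε) h

theorem sum_mul_pow_eq_zero_of_sum_mul_rpow_eq_zero (d : ι → ℝ) {ε : ℝ} (hε : 0 < ε)
    (hbase : ∀ i ∈ s, ∀ t ∈ Set.Ioo 0 ε, 1 - a i * t ≠ 0) {p : ℝ} (hp : ∀ k : ℕ, p ≠ k)
    (h : ∀ t ∈ Set.Ioo 0 ε, ∑ i ∈ s, d i * (1 - a i * t) ^ p = 0) (n : ℕ) :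
    ∑ i ∈ s, d i * a i ^ n = 0 :=
  sum_eq_zero_of_sum_mul_rpow_eq_zero_on_Ioo _ hε <|
    sum_mul_pow_mul_rpow_sub_eq_zero d isOpen_Ioo hbase hp h n

end RpowSums

theorem one_half_ne_natCast (k : ℕ) : (1 / 2 : ℝ) ≠ k := by
  intro h
  have : (1 : ℝ) = 2 * k := by linarith
  have : (1 : ℤ) = 2 * k := by exact_mod_cast this
  omega

open Real in
/-- If `σ` is a finite set of nonzero reals and
`r + Σ_{α ∈ σ} c(α)·√(1 − α t) = 0` for all `t ∈ (0, ε)` (with `1 - α t > 0` there),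
then `r = 0` and all coefficients `c(α)` vanish. -/
theorem stmt3 (σ : Finset ℝ) (hσ : ∀ α ∈ σ, α ≠ 0)
    (c : ℝ → ℝ) (r : ℝ) (ε : ℝ) (hε : 0 < ε)
    (hpos : ∀ α ∈ σ, ∀ t ∈ Set.Ioo (0 : ℝ) ε, 0 < 1 - α * t)
    (heq : ∀ t ∈ Set.Ioo (0 : ℝ) ε, r + ∑ α ∈ σ, c α * Real.sqrt (1 - α * t) = 0) :
    r = 0 ∧ ∀ α ∈ σ, c α = 0 := by
  have h0σ : (0 : ℝ) ∉ σ := fun h => hσ 0 h rfl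
  have hcd : ∀ α ∈ σ, Function.update c 0 r α = c α := fun α hα =>
    Function.update_of_ne (hσ α hα) _ _
  have hbase : ∀ α ∈ insert 0 σ, ∀ t ∈ Set.Ioo 0 ε, 1 - α * t ≠ 0 := by
    simpa using fun α hα t ht => (hpos α hα t ht).ne'
  have hsum : ∀ t ∈ Set.Ioo 0 ε,
      ∑ α ∈ insert 0 σ, Function.update c 0 r α * (1 - α * t) ^ (1 / 2 : ℝ) = 0 := by
    intro t ht
    refine Eq.trans ?_ (heq t ht)
    rw [Finset.sum_insert h0σ, Function.update_self, zero_mul, sub_zero, one_rpow, mul_one]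
    exact congrArg (r + ·) <| Finset.sum_congr rfl fun α hα => by rw [hcd α hα, sqrt_eq_rpow]
  have hzero := Finset.eq_zero_of_forall_sum_mul_pow_eq_zero <|
    sum_mul_pow_eq_zero_of_sum_mul_rpow_eq_zero _ hε hbase one_half_ne_natCast hsum
  refine ⟨by simpa using hzero 0 (Finset.mem_insert_self 0 σ), fun α hα => ?_⟩
  rw [← hcd α hα]
  exact hzero α (Finset.mem_insert_of_mem hα)
end

section
/- There do not exist ε ∈ {1, −1} and real numbers H, η₁, η₂, η₃, λ₁, λ₂, λ₃ with η₁·η₂·η₃ ≠ 0 such that η₁ + η₂ + η₃ = 0, λ₁ + λ₂ + λ₃ = H, ε·η_s² = −λ_s² + H·λ_s for s = 1, 2, 3, and ε·η₁·η₂·η₃ = λ₁·λ₂·η₃ + λ₃·λ₁·η₂ + λ₂·λ₃·η₁. -/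
/-- There are no `ε = ±1` and reals `H, η₁, η₂, η₃, λ₁, λ₂, λ₃` with
`η₁η₂η₃ ≠ 0`, `η₁ + η₂ + η₃ = 0`, `λ₁ + λ₂ + λ₃ = H`, `ε·η_s² = −λ_s² + H·λ_s` for
`s = 1,2,3`, and `ε·η₁·η₂·η₃ = λ₁λ₂η₃ + λ₃λ₁η₂ + λ₂λ₃η₁`.
(Here `l₁, l₂, l₃` stand for `λ₁, λ₂, λ₃`.) -/
theorem stmt5 :
    ¬ ∃ (ε H η₁ η₂ η₃ l₁ l₂ l₃ : ℝ),
      (ε = 1 ∨ ε = -1) ∧ η₁ * η₂ * η₃ ≠ 0 ∧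
      η₁ + η₂ + η₃ = 0 ∧
      l₁ + l₂ + l₃ = H ∧
      ε * η₁ ^ 2 = -l₁ ^ 2 + H * l₁ ∧
      ε * η₂ ^ 2 = -l₂ ^ 2 + H * l₂ ∧
      ε * η₃ ^ 2 = -l₃ ^ 2 + H * l₃ ∧
      ε * η₁ * η₂ * η₃ = l₁ * l₂ * η₃ + l₃ * l₁ * η₂ + l₂ * l₃ * η₁ := by
  rintro ⟨ε, H, a, b, c, p, q, r, hε, hne, hs, hl, h1, h2, h3, h4⟩
  apply hne
  rcases hε with hε | hε <;> subst hε
  · -- ε = 1 : pairwise relations ab = -pq, bc = -qr, ca = -rp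
    have hab : a * b + p * q = 0 := by
      linear_combination ((a + b - c) / 2) * hs + ((p + q - r) / 2) * hl
        + (1 / 2) * h3 - (1 / 2) * h1 - (1 / 2) * h2
    have hbc : b * c + q * r = 0 := by
      linear_combination ((b + c - a) / 2) * hs + ((q + r - p) / 2) * hl
        + (1 / 2) * h1 - (1 / 2) * h2 - (1 / 2) * h3
    have hca : c * a + r * p = 0 := by
      linear_combination ((c + a - b) / 2) * hs + ((r + p - q) / 2) * hl
        + (1 / 2) * h2 - (1 / 2) * h3 - (1 / 2) * h1
    -- h4 becomes abc = -3abc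
    linear_combination (1 / 4) * h4 + (c / 4) * hab + (a / 4) * hbc + (b / 4) * hca
  · have hab : -(a * b) + p * q = 0 := by
      linear_combination (-(a + b - c) / 2) * hs + ((p + q - r) / 2) * hl
        + (1 / 2) * h3 - (1 / 2) * h1 - (1 / 2) * h2
    have hbc : -(b * c) + q * r = 0 := by
      linear_combination (-(b + c - a) / 2) * hs + ((q + r - p) / 2) * hl
        + (1 / 2) * h1 - (1 / 2) * h2 - (1 / 2) * h3
    have hca : -(c * a) + r * p = 0 := by
      linear_combination (-(c + a - b) / 2) * hs + ((r + p - q) / 2) * hl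
        + (1 / 2) * h2 - (1 / 2) * h3 - (1 / 2) * h1
    linear_combination (-1 / 4) * h4 - (c / 4) * hab - (a / 4) * hbc - (b / 4) * hca
end

section
/- Let Z ∈ ℂ³ be a vector with ‖Z‖ = 1. Then the set {x : x a 3×3 complex matrix with xᵀ = x, x ∈ SU(3), and x·conj(Z) = Z} equals the set {Q·Qᵀ : Q ∈ SU(3) and Q·e₁ = Z}, where conj(Z) denotes the componentwise complex conjugate of Z and e₁ = (1,0,0)ᵀ. -/
/-!
For unitary `Q` one has `Qᵀ conj(Q e₁) = conj(Q⋆ Q e₁) = e₁`, so `Q Qᵀ` sends `conj Z` to `Z = Q e₁`.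
Conversely, pick `U ∈ SU(3)` with `U e₁ = Z` (a unitary completion of `Z`, one column rescaled to
fix the determinant). The congruence `x ↦ U⋆ x (U⋆)ᵀ` reduces the claim to `Z = e₁`. A symmetric
`y ∈ SU(3)` fixing `e₁` has first row and column `e₁`, and `y⋆ = adj y` forces
`y = 1 ⊕ (a + i (b σ₃ + c σ₁))` with `a² + b² + c² = 1`. These matrices are symmetric and square
like unit quaternions, `(a, b, c)² = (a² - b² - c², 2ab, 2ac)`; every point of the sphere is such
a square, so `y = P Pᵀ` with `P` of the same form.
-/

open Matrix Complex

namespace Matrix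

section CommRing

variable {n : Type*} [Fintype n] {α : Type*} [CommRing α] [StarRing α]

theorem transpose_star_mulVec_star (U : Matrix n n α) (v : n → α) :
    (star U)ᵀ *ᵥ star v = star (U *ᵥ v) := by
  rw [star_mulVec, mulVec_transpose, star_eq_conjTranspose]

variable [DecidableEq n]

theorem transpose_mem_specialUnitaryGroup {A : Matrix n n α}
    (hA : A ∈ specialUnitaryGroup n α) : Aᵀ ∈ specialUnitaryGroup n α := by
  rw [mem_specialUnitaryGroup_iff] at hA ⊢
  refine ⟨?_, by rw [det_transpose, hA.2]⟩
  rw [mem_unitaryGroup_iff, star_eq_conjTranspose,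
    conjTranspose_transpose_eq_transpose_conjTranspose, ← transpose_mul, ← star_eq_conjTranspose,
    mem_unitaryGroup_iff'.mp hA.1, transpose_one]

theorem star_mem_specialUnitaryGroup {A : Matrix n n α}
    (hA : A ∈ specialUnitaryGroup n α) : star A ∈ specialUnitaryGroup n α := by
  rw [mem_specialUnitaryGroup_iff] at hA ⊢
  exact ⟨Unitary.star_mem hA.1, by rw [star_eq_conjTranspose, det_conjTranspose, hA.2, star_one]⟩

theorem star_eq_adjugate_of_mem_specialUnitaryGroup {A : Matrix n n α}
    (hA : A ∈ specialUnitaryGroup n α) : star A = adjugate A := by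
  rw [mem_specialUnitaryGroup_iff] at hA
  calc star A = star A * (A * adjugate A) := by rw [mul_adjugate, hA.2, one_smul, mul_one]
    _ = adjugate A := by rw [← mul_assoc, mem_unitaryGroup_iff'.mp hA.1, one_mul]

theorem diagonal_mem_unitaryGroup {d : n → α} (hd : ∀ i, star (d i) * d i = 1) :
    diagonal d ∈ unitaryGroup n α := by
  rw [mem_unitaryGroup_iff', star_eq_conjTranspose, diagonal_conjTranspose, diagonal_mul_diagonal,
    ← diagonal_one]
  exact congrArg diagonal (funext hd)

theorem mul_diagonal_update_mem_specialUnitaryGroup {U : Matrix n n α}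
    (hU : U ∈ unitaryGroup n α) (j : n) :
    U * diagonal (Function.update 1 j (star U.det)) ∈ specialUnitaryGroup n α := by
  have hdet : star U.det * U.det = 1 := (det_of_mem_unitary hU).1
  refine mem_specialUnitaryGroup_iff.mpr ⟨mul_mem hU (diagonal_mem_unitaryGroup fun i => ?_), ?_⟩
  · rcases eq_or_ne i j with rfl | hij
    · simpa [mul_comm] using hdet
    · simp [hij]
  · rw [det_mul, det_diagonal, Finset.prod_update_of_mem (Finset.mem_univ j)]
    simpa [mul_comm] using hdet

theorem mul_transpose_mulVec_star_mulVec {U : Matrix n n α} (hU : U ∈ unitaryGroup n α)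
    (v : n → α) : (U * Uᵀ) *ᵥ star (U *ᵥ v) = U *ᵥ star v := by
  rw [← transpose_star_mulVec_star, ← mulVec_mulVec, mulVec_mulVec _ Uᵀ, ← transpose_mul,
    mem_unitaryGroup_iff'.mp hU, transpose_one, one_mulVec]

end CommRing

section RCLike

variable {n : Type*} [Fintype n] [DecidableEq n] {𝕜 : Type*} [RCLike 𝕜]

theorem exists_mem_unitaryGroup_col_eq (i : n) {v : EuclideanSpace 𝕜 n} (hv : ‖v‖ = 1) :
    ∃ U ∈ unitaryGroup n 𝕜, U.col i = v := by
  have hv' : Orthonormal 𝕜 (({i} : Set n).domRestrict fun _ => v) := by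
    rw [orthonormal_iff_ite]
    rintro ⟨k, rfl⟩ ⟨l, rfl⟩
    simp [Set.domRestrict, inner_self_eq_norm_sq_to_K, hv]
  obtain ⟨b, hb⟩ := hv'.exists_orthonormalBasis_extension_of_card_eq (by simp)
  refine ⟨(EuclideanSpace.basisFun n 𝕜).toBasis.toMatrix b,
    (EuclideanSpace.basisFun n 𝕜).toMatrix_orthonormalBasis_mem_unitary b, ?_⟩
  ext k
  rw [col_apply, Module.Basis.toMatrix_apply, hb i rfl]
  simp

theorem exists_mem_specialUnitaryGroup_col_eq {i j : n} (hij : i ≠ j) {v : EuclideanSpace 𝕜 n}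
    (hv : ‖v‖ = 1) : ∃ U ∈ specialUnitaryGroup n 𝕜, U.col i = v := by
  obtain ⟨U, hU, hUi⟩ := exists_mem_unitaryGroup_col_eq i hv
  refine ⟨_, mul_diagonal_update_mem_specialUnitaryGroup hU j, ?_⟩
  ext k
  simp [mul_diagonal, hij, ← hUi]

end RCLike

end Matrix

theorem exists_sphere_half_angle {α β γ : ℝ} (h : α ^ 2 + β ^ 2 + γ ^ 2 = 1) :
    ∃ a b c : ℝ, a ^ 2 + b ^ 2 + c ^ 2 = 1 ∧
      a ^ 2 - b ^ 2 - c ^ 2 = α ∧ 2 * a * b = β ∧ 2 * a * c = γ := by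
  by_cases hα : α = -1
  · have hβ : β = 0 := by nlinarith
    have hγ : γ = 0 := by nlinarith
    exact ⟨0, 0, 1, by norm_num, by norm_num [hα], by simp [hβ], by simp [hγ]⟩
  have hα' : -1 < α := (show -1 ≤ α by nlinarith).lt_of_ne (Ne.symm hα)
  set a := √((1 + α) / 2)
  have ha : a ^ 2 = (1 + α) / 2 := Real.sq_sqrt (by linarith)
  have ha0 : a ≠ 0 := (Real.sqrt_pos.mpr (by linarith)).ne'
  refine ⟨a, β / (2 * a), γ / (2 * a), ?_, ?_, by field_simp, by field_simp⟩
  · field_simp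
    nlinarith
  · field_simp
    nlinarith

def sphereMatrix (a b c : ℝ) : Matrix (Fin 3) (Fin 3) ℂ :=
  !![1, 0, 0; 0, a + b * I, c * I; 0, c * I, a - b * I]

theorem sphereMatrix_transpose (a b c : ℝ) : (sphereMatrix a b c)ᵀ = sphereMatrix a b c := by
  ext i j
  fin_cases i <;> fin_cases j <;> rfl

theorem sphereMatrix_mulVec_single_zero (a b c : ℝ) :
    sphereMatrix a b c *ᵥ Pi.single 0 1 = Pi.single 0 1 := by
  ext i
  fin_cases i <;> simp [sphereMatrix]

theorem sphereMatrix_mul_self (a b c : ℝ) :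
    sphereMatrix a b c * sphereMatrix a b c =
      sphereMatrix (a ^ 2 - b ^ 2 - c ^ 2) (2 * a * b) (2 * a * c) := by
  ext i j
  fin_cases i <;> fin_cases j <;> simp [sphereMatrix, mul_apply, Fin.sum_univ_three] <;>
    ring_nf <;> simp [I_sq] <;> ring

theorem sphereMatrix_mem_specialUnitaryGroup {a b c : ℝ} (h : a ^ 2 + b ^ 2 + c ^ 2 = 1) :
    sphereMatrix a b c ∈ specialUnitaryGroup (Fin 3) ℂ := by
  have hC : (a : ℂ) ^ 2 + (b : ℂ) ^ 2 + (c : ℂ) ^ 2 = 1 := by exact_mod_cast h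
  refine mem_specialUnitaryGroup_iff.mpr ⟨mem_unitaryGroup_iff'.mpr ?_, ?_⟩
  · ext i j
    fin_cases i <;> fin_cases j <;>
      simp [sphereMatrix, mul_apply, Fin.sum_univ_three, conj_ofReal] <;>
      first | ring1 | linear_combination hC - ((b : ℂ) ^ 2 + (c : ℂ) ^ 2) * I_sq
  · rw [det_fin_three]
    simp [sphereMatrix]
    linear_combination hC - ((b : ℂ) ^ 2 + (c : ℂ) ^ 2) * I_sq

theorem exists_eq_sphereMatrix {y : Matrix (Fin 3) (Fin 3) ℂ} (hsymm : yᵀ = y)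
    (hy : y ∈ specialUnitaryGroup (Fin 3) ℂ) (hfix : y *ᵥ Pi.single 0 1 = Pi.single 0 1) :
    ∃ a b c : ℝ, a ^ 2 + b ^ 2 + c ^ 2 = 1 ∧ y = sphereMatrix a b c := by
  have hcol (i : Fin 3) : y i 0 = (Pi.single 0 1 : Fin 3 → ℂ) i := by
    rw [← hfix, mulVec_single_one, col_apply]
  have hsymm' (i j : Fin 3) : y j i = y i j := by rw [← transpose_apply y i j, hsymm]
  have hrow (j : Fin 3) : y 0 j = (Pi.single 0 1 : Fin 3 → ℂ) j := (hsymm' j 0).trans (hcol j)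
  have hadj := star_eq_adjugate_of_mem_specialUnitaryGroup hy
  have h22 : star (y 2 2) = y 1 1 := by
    simpa [adjugate_fin_three, hcol, hrow] using congrFun₂ hadj 2 2
  have h12 : star (y 1 2) = -y 1 2 := by
    simpa [adjugate_fin_three, hcol, hrow, hsymm' 1 2] using congrFun₂ hadj 2 1
  have hdet : y 1 1 * y 2 2 - y 1 2 ^ 2 = 1 := by
    have := (mem_specialUnitaryGroup_iff.mp hy).2
    rw [det_fin_three] at this
    simp [hcol, hsymm' 1 2] at this
    linear_combination this
  obtain ⟨a, b, h11⟩ : ∃ a b : ℝ, y 1 1 = a + b * I := ⟨_, _, (re_add_im _).symm⟩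
  obtain ⟨c, h12'⟩ : ∃ c : ℝ, y 1 2 = c * I := by
    refine ⟨(y 1 2).im, ?_⟩
    have := congrArg re h12
    simp only [star_def, conj_re, neg_re] at this
    simpa [show (y 1 2).re = 0 by linarith] using (re_add_im (y 1 2)).symm
  have h22' : y 2 2 = a - b * I := by
    rw [← star_star (y 2 2), h22, h11]
    simp [conj_ofReal, sub_eq_add_neg]
  refine ⟨a, b, c, ?_, ?_⟩
  · rw [h11, h22', h12'] at hdet
    have : ((a ^ 2 + b ^ 2 + c ^ 2 : ℝ) : ℂ) = 1 := by
      push_cast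
      linear_combination hdet + ((b : ℂ) ^ 2 + (c : ℂ) ^ 2) * I_sq
    exact_mod_cast this
  · ext i j
    fin_cases i <;> fin_cases j <;> simp [sphereMatrix, hcol, hrow, hsymm' 1 2, h11, h12', h22']

theorem exists_mem_specialUnitaryGroup_mul_transpose_eq {y : Matrix (Fin 3) (Fin 3) ℂ}
    (hsymm : yᵀ = y) (hy : y ∈ specialUnitaryGroup (Fin 3) ℂ)
    (hfix : y *ᵥ Pi.single 0 1 = Pi.single 0 1) :
    ∃ P ∈ specialUnitaryGroup (Fin 3) ℂ, P *ᵥ Pi.single 0 1 = Pi.single 0 1 ∧ P * Pᵀ = y := by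
  obtain ⟨α, β, γ, h, rfl⟩ := exists_eq_sphereMatrix hsymm hy hfix
  obtain ⟨a, b, c, habc, rfl, rfl, rfl⟩ := exists_sphere_half_angle h
  exact ⟨sphereMatrix a b c, sphereMatrix_mem_specialUnitaryGroup habc,
    sphereMatrix_mulVec_single_zero a b c, by rw [sphereMatrix_transpose, sphereMatrix_mul_self]⟩

theorem exists_mem_specialUnitaryGroup_eq_mul_transpose {U x : Matrix (Fin 3) (Fin 3) ℂ}
    {Z : Fin 3 → ℂ} (hU : U ∈ specialUnitaryGroup (Fin 3) ℂ) (hUZ : U *ᵥ Pi.single 0 1 = Z)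
    (hsymm : xᵀ = x) (hx : x ∈ specialUnitaryGroup (Fin 3) ℂ) (hxZ : x *ᵥ star Z = Z) :
    ∃ Q ∈ specialUnitaryGroup (Fin 3) ℂ, Q *ᵥ Pi.single 0 1 = Z ∧ x = Q * Qᵀ := by
  have hUU : U * star U = 1 := mem_unitaryGroup_iff.mp hU.1
  set y := star U * x * (star U)ᵀ
  have hy_symm : yᵀ = y := by simp only [y, transpose_mul, transpose_transpose, hsymm, mul_assoc]
  have hy : y ∈ specialUnitaryGroup (Fin 3) ℂ := mul_mem (mul_mem (star_mem_specialUnitaryGroup hU)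
    hx) (transpose_mem_specialUnitaryGroup (star_mem_specialUnitaryGroup hU))
  have hy_fix : y *ᵥ Pi.single 0 1 = Pi.single 0 1 := by
    have hstar : (Pi.single 0 1 : Fin 3 → ℂ) = star (Pi.single 0 1) := by simp
    rw [← mulVec_mulVec, hstar, transpose_star_mulVec_star, hUZ, ← mulVec_mulVec, hxZ, ← hUZ,
      mulVec_mulVec, mem_unitaryGroup_iff'.mp hU.1, one_mulVec, ← hstar]
  obtain ⟨P, hP, hPfix, hPy⟩ := exists_mem_specialUnitaryGroup_mul_transpose_eq hy_symm hy hy_fix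
  refine ⟨U * P, mul_mem hU hP, by rw [← mulVec_mulVec, hPfix, hUZ], ?_⟩
  calc x = (U * star U) * x * (U * star U)ᵀ := by rw [hUU, transpose_one, one_mul, mul_one]
    _ = U * (P * Pᵀ) * Uᵀ := by simp only [hPy, y, transpose_mul, mul_assoc]
    _ = (U * P) * (U * P)ᵀ := by simp only [transpose_mul, mul_assoc]

/-- For a unit vector `Z ∈ ℂ³`, the set of symmetric matrices `x ∈ SU(3)` with
`x·conj(Z) = Z` equals the set `{Q·Qᵀ : Q ∈ SU(3), Q·e₁ = Z}`. -/
theorem stmt7 (Z : Fin 3 → ℂ) (hZ : ∑ i, ‖Z i‖ ^ 2 = 1) :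
    {x : Matrix (Fin 3) (Fin 3) ℂ |
        x.transpose = x ∧ x ∈ Matrix.specialUnitaryGroup (Fin 3) ℂ ∧
        x.mulVec (fun i => starRingEnd ℂ (Z i)) = Z} =
      {x : Matrix (Fin 3) (Fin 3) ℂ |
        ∃ Q ∈ Matrix.specialUnitaryGroup (Fin 3) ℂ,
          Q.mulVec (Pi.single 0 1) = Z ∧ x = Q * Q.transpose} := by
  ext x
  constructor
  · rintro ⟨hsymm, hx, hxZ⟩
    have hZ' : ‖WithLp.toLp 2 Z‖ = 1 := by simp [EuclideanSpace.norm_eq, hZ]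
    obtain ⟨U, hU, hUZ⟩ := exists_mem_specialUnitaryGroup_col_eq (by decide : (0 : Fin 3) ≠ 1) hZ'
    exact exists_mem_specialUnitaryGroup_eq_mul_transpose hU
      (by rw [mulVec_single_one, hUZ]) hsymm hx hxZ
  · rintro ⟨Q, hQ, rfl, rfl⟩
    refine ⟨by rw [transpose_mul, transpose_transpose], mul_mem hQ
      (transpose_mem_specialUnitaryGroup hQ), ?_⟩
    have h := mul_transpose_mulVec_star_mulVec hQ.1 (Pi.single (0 : Fin 3) (1 : ℂ))
    rwa [Pi.star_single, star_one] at h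
end

section
/- Let p₁, q₁, p₂, q₂ ∈ ℝ³ with ⟨p₁, q₁⟩ = 1 and ⟨p₂, q₂⟩ = 1. For p, q ∈ ℝ³ with ⟨p, q⟩ = 1 define S_{(p,q)} = {P : P a symmetric positive definite real 3×3 matrix with det P = 1 and P·q = p}. Then S_{(p₁,q₁)} = S_{(p₂,q₂)} if and only if (p₁, q₁) = (p₂, q₂) or (p₁, q₁) = (−p₂, −q₂). -/
/-!
Choose an invertible `F` with first row `p` and `F q = e₀` (rows `p, q ⨯₃ a, q ⨯₃ b` for suitable
`a, b`). Then `Fᵀ diag(1, t, (t det F²)⁻¹) F ∈ S_(p,q)` for every `t > 0`. If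
`S_(p₁,q₁) ⊆ S_(p₂,q₂)`, all these matrices send `q₂` to `p₂`; comparing `t = 1` and `t = 2`
forces `F q₂ ∥ e₀`, i.e. `q₂ = c q₁`. Then `p₂ = c p₁`, and `⟨p₂, q₂⟩ = 1` gives `c = ±1`.
-/

open Matrix

def spdFiber (p q : Fin 3 → ℝ) : Set (Matrix (Fin 3) (Fin 3) ℝ) :=
  {P | P.IsSymm ∧ P.PosDef ∧ P.det = 1 ∧ P *ᵥ q = p}

lemma spdFiber_neg (p q : Fin 3 → ℝ) : spdFiber (-p) (-q) = spdFiber p q := by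
  ext P
  simp only [spdFiber, Set.mem_ofPred_eq, mulVec_neg, neg_inj]

lemma exists_frame_of_triple_product_ne_zero {p q : Fin 3 → ℝ} (hpq : p ⬝ᵥ q = 1)
    (a b : Fin 3 → ℝ) (hab : q ⬝ᵥ a ⨯₃ b ≠ 0) :
    ∃ F : Matrix (Fin 3) (Fin 3) ℝ, F.det ≠ 0 ∧ F 0 = p ∧ F *ᵥ q = Pi.single 0 1 := by
  refine ⟨of ![p, q ⨯₃ a, q ⨯₃ b], ?_, rfl, ?_⟩
  · have hdet : (of ![p, q ⨯₃ a, q ⨯₃ b]).det = (q ⬝ᵥ a ⨯₃ b) * (p ⬝ᵥ q) := by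
      simp [det_fin_three, crossProduct, dotProduct, Fin.sum_univ_three]
      ring
    simpa [hdet, hpq] using hab
  · ext i
    fin_cases i
    · simpa [mulVec] using hpq
    · exact (dotProduct_comm _ _).trans (dot_self_cross q a)
    · exact (dotProduct_comm _ _).trans (dot_self_cross q b)

lemma exists_frame {p q : Fin 3 → ℝ} (hpq : p ⬝ᵥ q = 1) :
    ∃ F : Matrix (Fin 3) (Fin 3) ℝ, F.det ≠ 0 ∧ F 0 = p ∧ F *ᵥ q = Pi.single 0 1 := by
  have hq : q ≠ 0 := by
    rintro rfl
    simp at hpq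
  obtain ⟨i, hi⟩ := Function.ne_iff.mp hq
  fin_cases i
  · exact exists_frame_of_triple_product_ne_zero hpq (Pi.single 1 1) (Pi.single 2 1)
      (by simpa [crossProduct, dotProduct, Fin.sum_univ_three] using hi)
  · exact exists_frame_of_triple_product_ne_zero hpq (Pi.single 2 1) (Pi.single 0 1)
      (by simpa [crossProduct, dotProduct, Fin.sum_univ_three] using hi)
  · exact exists_frame_of_triple_product_ne_zero hpq (Pi.single 0 1) (Pi.single 1 1)
      (by simpa [crossProduct, dotProduct, Fin.sum_univ_three] using hi)

noncomputable def stretch (F : Matrix (Fin 3) (Fin 3) ℝ) (t : ℝ) : Matrix (Fin 3) (Fin 3) ℝ :=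
  Fᵀ * diagonal ![1, t, (t * F.det ^ 2)⁻¹] * F

section stretch

variable {F : Matrix (Fin 3) (Fin 3) ℝ} {t : ℝ}

lemma stretch_posDef (hF : F.det ≠ 0) (ht : 0 < t) : (stretch F t).PosDef := by
  have hD : (diagonal ![1, t, (t * F.det ^ 2)⁻¹]).PosDef := by
    rw [posDef_diagonal_iff]
    intro i
    fin_cases i <;> simp [ht, sq_pos_of_ne_zero, hF]
  rw [stretch, ← conjTranspose_eq_transpose_of_trivial]
  exact hD.conjTranspose_mul_mul_same
    (mulVec_injective_iff_isUnit.mpr ((isUnit_iff_isUnit_det F).mpr hF.isUnit))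

lemma det_stretch (hF : F.det ≠ 0) (ht : t ≠ 0) : (stretch F t).det = 1 := by
  rw [stretch, det_mul, det_mul, det_transpose, det_diagonal, Fin.prod_univ_three]
  simp only [cons_val_zero, cons_val_one, cons_val_two, Nat.succ_eq_add_one, Nat.reduceAdd,
    tail_cons, head_cons]
  field_simp

lemma stretch_mulVec {q : Fin 3 → ℝ} (hq : F *ᵥ q = Pi.single 0 1) : stretch F t *ᵥ q = F 0 := by
  rw [stretch, ← mulVec_mulVec, hq, ← mulVec_mulVec, diagonal_mulVec_single]
  simp only [cons_val_zero, mul_one]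
  exact mulVec_single_one Fᵀ 0

lemma stretch_mem_spdFiber {p q : Fin 3 → ℝ} (hF : F.det ≠ 0) (hp : F 0 = p)
    (hq : F *ᵥ q = Pi.single 0 1) (ht : 0 < t) : stretch F t ∈ spdFiber p q :=
  ⟨isHermitian_iff_isSymm.mp (stretch_posDef hF ht).isHermitian, stretch_posDef hF ht,
    det_stretch hF ht.ne', hp ▸ stretch_mulVec hq⟩

lemma eq_smul_of_stretch_one_mulVec_eq {q w : Fin 3 → ℝ} (hF : F.det ≠ 0)
    (hq : F *ᵥ q = Pi.single 0 1) (h : stretch F 1 *ᵥ w = stretch F 2 *ᵥ w) :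
    w = (F 0 ⬝ᵥ w) • q := by
  have hF_inj : Function.Injective F.mulVec :=
    mulVec_injective_iff_isUnit.mpr ((isUnit_iff_isUnit_det F).mpr hF.isUnit)
  have hFt_inj : Function.Injective Fᵀ.mulVec :=
    mulVec_injective_iff_isUnit.mpr ((isUnit_iff_isUnit_det Fᵀ).mpr (by simpa using hF.isUnit))
  simp only [stretch, ← mulVec_mulVec] at h
  have hdiag := hFt_inj h
  have h1 : (F *ᵥ w) 1 = 0 := by
    have : (F *ᵥ w) 1 = 2 * (F *ᵥ w) 1 := by simpa [mulVec_diagonal] using congrFun hdiag 1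
    linarith
  have h2 : (F *ᵥ w) 2 = 0 := by
    simpa [mulVec_diagonal, hF] using congrFun hdiag 2
  apply hF_inj
  rw [mulVec_smul, hq]
  ext i
  fin_cases i
  · exact (mul_one _).symm
  · simp [h1]
  · simp [h2]

end stretch

lemma exists_smul_of_spdFiber_subset {p₁ q₁ p₂ q₂ : Fin 3 → ℝ} (h₁ : p₁ ⬝ᵥ q₁ = 1)
    (h : spdFiber p₁ q₁ ⊆ spdFiber p₂ q₂) : ∃ c : ℝ, p₂ = c • p₁ ∧ q₂ = c • q₁ := by
  obtain ⟨F, hF, hp, hq⟩ := exists_frame h₁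
  have hmem (t : ℝ) (ht : 0 < t) : stretch F t ∈ spdFiber p₁ q₁ :=
    stretch_mem_spdFiber hF hp hq ht
  have hp₂ (t : ℝ) (ht : 0 < t) : stretch F t *ᵥ q₂ = p₂ := (h (hmem t ht)).2.2.2
  obtain ⟨c, rfl⟩ : ∃ c : ℝ, q₂ = c • q₁ :=
    ⟨_, eq_smul_of_stretch_one_mulVec_eq hF hq ((hp₂ 1 one_pos).trans (hp₂ 2 two_pos).symm)⟩
  refine ⟨c, ?_, rfl⟩
  rw [← hp₂ 1 one_pos, mulVec_smul, (hmem 1 one_pos).2.2.2]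

open Matrix in
/-- For `p, q ∈ ℝ³` with `⟨p,q⟩ = 1`, let
`S_{(p,q)} = {P : P symmetric positive definite real 3×3 matrix, det P = 1, P·q = p}`.
Then `S_{(p₁,q₁)} = S_{(p₂,q₂)}` iff `(p₁,q₁) = ±(p₂,q₂)`. -/
theorem stmt10 (p₁ q₁ p₂ q₂ : Fin 3 → ℝ)
    (h₁ : p₁ ⬝ᵥ q₁ = 1) (h₂ : p₂ ⬝ᵥ q₂ = 1)
    (S : (Fin 3 → ℝ) → (Fin 3 → ℝ) → Set (Matrix (Fin 3) (Fin 3) ℝ))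
    (hS : ∀ p q : Fin 3 → ℝ, S p q =
      {P | P.IsSymm ∧ P.PosDef ∧ P.det = 1 ∧ P.mulVec q = p}) :
    S p₁ q₁ = S p₂ q₂ ↔ (p₁ = p₂ ∧ q₁ = q₂) ∨ (p₁ = -p₂ ∧ q₁ = -q₂) := by
  obtain rfl : S = spdFiber := funext₂ hS
  constructor
  · intro h
    obtain ⟨c, rfl, rfl⟩ := exists_smul_of_spdFiber_subset h₁ h.subset
    have hc : c * c = 1 := by simpa [smul_dotProduct, dotProduct_smul, h₁] using h₂
    rcases mul_self_eq_one_iff.mp hc with rfl | rfl <;> simp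
  · rintro (⟨rfl, rfl⟩ | ⟨rfl, rfl⟩)
    · rfl
    · exact spdFiber_neg p₂ q₂
end

section
/- Let p, q, p₁, p₂, q₁, q₂ ∈ ℝ³ be such that the pairs (p₁, q₁) and (p₂, q₂) are linearly independent as vectors of ℝ³ × ℝ³ ≅ ℝ⁶, and suppose ⟨p, q⟩ = 1, ⟨p, q₁⟩ = ⟨p, q₂⟩ = 0, ⟨q, p₁⟩ = ⟨q, p₂⟩ = 0, and det(p | p₁ | p₂) + det(q | q₁ | q₂) = 0, where det(a | b | c) denotes the determinant of the 3×3 matrix with columns a, b, c. Then p₁ and p₂ are not both zero. -/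
open Matrix in
/-- If `(p₁,q₁)` and `(p₂,q₂)` are linearly independent in `ℝ³ × ℝ³`,
`⟨p,q⟩ = 1`, `⟨p,qᵢ⟩ = ⟨q,pᵢ⟩ = 0` for `i = 1,2`, and
`det(p|p₁|p₂) + det(q|q₁|q₂) = 0`, then `p₁` and `p₂` are not both zero. -/
theorem stmt11 (p q p₁ p₂ q₁ q₂ : Fin 3 → ℝ)
    (hli : LinearIndependent ℝ ![(p₁, q₁), (p₂, q₂)])
    (hpq : p ⬝ᵥ q = 1)
    (hpq₁ : p ⬝ᵥ q₁ = 0) (hpq₂ : p ⬝ᵥ q₂ = 0)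
    (hqp₁ : q ⬝ᵥ p₁ = 0) (hqp₂ : q ⬝ᵥ p₂ = 0)
    (hdet : (Matrix.of ![p, p₁, p₂]).transpose.det
          + (Matrix.of ![q, q₁, q₂]).transpose.det = 0) :
    ¬(p₁ = 0 ∧ p₂ = 0) := by
  rintro ⟨rfl, rfl⟩
  -- the p-determinant vanishes
  have hdp : (Matrix.of ![p, 0, 0]).transpose.det = 0 := by
    rw [Matrix.det_transpose]
    apply Matrix.det_eq_zero_of_row_eq_zero 1
    intro j; rfl
  rw [hdp, zero_add] at hdet
  -- q₁, q₂ are linearly independent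
  have hq12 : LinearIndependent ℝ ![q₁, q₂] := by
    apply LinearIndependent.of_comp (LinearMap.inr ℝ (Fin 3 → ℝ) (Fin 3 → ℝ))
    convert hli using 1
    ext i <;> fin_cases i <;> rfl
  -- q is in the span of q₁, q₂
  have hdep : ¬ LinearIndependent ℝ ![q, q₁, q₂] := by
    intro h
    have : IsUnit (Matrix.of ![q, q₁, q₂]) := by
      rw [← Matrix.linearIndependent_rows_iff_isUnit]
      exact h
    rw [Matrix.isUnit_iff_isUnit_det] at this
    rw [Matrix.det_transpose] at hdet
    exact this.ne_zero hdet
  have hmem : q ∈ Submodule.span ℝ (Set.range ![q₁, q₂]) := by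
    by_contra hn
    apply hdep
    have : ![q, q₁, q₂] = Fin.cons q ![q₁, q₂] := by
      ext i <;> fin_cases i <;> rfl
    rw [this, linearIndependent_fin_cons]
    exact ⟨hq12, hn⟩
  obtain ⟨c, hc⟩ := (Finsupp.mem_span_range_iff_exists_finsupp).mp hmem
  have : p ⬝ᵥ q = 0 := by
    rw [← hc]
    rw [show (Finsupp.sum c fun i a => a • ![q₁, q₂] i)
        = c 0 • q₁ + c 1 • q₂ from ?_]
    · simp [dotProduct_add, dotProduct_smul, hpq₁, hpq₂]
    · rw [Finsupp.sum_fintype _ _ (by simp)]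
      simp [Fin.sum_univ_two]
  rw [hpq] at this
  exact one_ne_zero this
end

section
/- Let p, q : ℝ → ℝ³ be differentiable maps such that ⟨p(s), q(t)⟩ = 1 for all s, t ∈ ℝ, and such that p′(s) ≠ 0 and q′(t) ≠ 0 for all s, t ∈ ℝ. Then for all s₁, s₂ ∈ ℝ the vectors p′(s₁) and p′(s₂) are linearly dependent. -/
/-!
Differentiating `⟨p s, q t⟩ = 1` in `s`, in `t`, and in both shows that every `p′ s` is orthogonal
to `q 0` and to `q′ 0`. These two vectors are independent, since `p 0` pairs to `1` with the
first and to `0` with the second, which is nonzero. As the dot product is positive definite, two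
independent values of `p′` would extend them to four independent vectors in `ℝ³`.
-/

open Matrix

theorem HasDerivAt.dotProduct_const {ι : Type*} [Fintype ι] {f : ℝ → ι → ℝ} {f' : ι → ℝ}
    {t : ℝ} (hf : HasDerivAt f f' t) (c : ι → ℝ) :
    HasDerivAt (fun s => f s ⬝ᵥ c) (f' ⬝ᵥ c) t :=
  HasDerivAt.fun_sum fun i _ => (hasDerivAt_pi.mp hf i).mul_const (c i)

theorem deriv_dotProduct_eq_zero_of_forall_eq {ι : Type*} [Fintype ι] {f : ℝ → ι → ℝ}
    {t : ℝ} (hf : DifferentiableAt ℝ f t) {c : ι → ℝ} {k : ℝ} (h : ∀ s, f s ⬝ᵥ c = k) :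
    deriv f t ⬝ᵥ c = 0 :=
  (hf.hasDerivAt.dotProduct_const c).unique <| by
    simpa only [funext h] using hasDerivAt_const t k

theorem linearIndependent_pair_of_dotProduct {K ι : Type*} [Field K] [Fintype ι]
    {a x y : ι → K} (hx : a ⬝ᵥ x ≠ 0) (hy : a ⬝ᵥ y = 0) (hy₀ : y ≠ 0) :
    LinearIndependent K ![x, y] := by
  refine LinearIndependent.pair_iff.mpr fun s t hst => ?_
  have hs : s = 0 := by
    simpa [hx, hy] using congrArg (a ⬝ᵥ ·) hst
  subst hs
  exact ⟨rfl, (smul_eq_zero.mp (by simpa using hst)).resolve_right hy₀⟩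

theorem LinearIndependent.sum_elim_of_dotProduct_eq_zero {R ι κ κ' : Type*} [CommRing R]
    [LinearOrder R] [IsStrictOrderedRing R] [Fintype ι] [Fintype κ] [Fintype κ']
    {v : κ → ι → R} {w : κ' → ι → R} (hv : LinearIndependent R v)
    (hw : LinearIndependent R w) (h : ∀ i j, v i ⬝ᵥ w j = 0) :
    LinearIndependent R (Sum.elim v w) := by
  refine hv.sum_type hw (Submodule.disjoint_def.mpr fun x hxv hxw => ?_)
  obtain ⟨c, hc⟩ := (Submodule.mem_span_range_iff_exists_fun R).mp hxv
  obtain ⟨d, hd⟩ := (Submodule.mem_span_range_iff_exists_fun R).mp hxw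
  refine dotProduct_self_eq_zero.mp ?_
  calc x ⬝ᵥ x = (∑ i, c i • v i) ⬝ᵥ ∑ j, d j • w j := by rw [hc, hd]
    _ = 0 := by simp [sum_dotProduct, dotProduct_sum, dotProduct_smul, h]

theorem stmt18_general (p q : ℝ → (Fin 3 → ℝ))
    (hp : Differentiable ℝ p) (hq : Differentiable ℝ q)
    (hpq : ∀ s t : ℝ, p s ⬝ᵥ q t = 1)
    (hq' : ∀ t : ℝ, deriv q t ≠ 0) :
    ∀ s₁ s₂ : ℝ, ¬ LinearIndependent ℝ ![deriv p s₁, deriv p s₂] := by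
  intro s₁ s₂ hind
  have hp'q : ∀ s t, deriv p s ⬝ᵥ q t = 0 := fun s t =>
    deriv_dotProduct_eq_zero_of_forall_eq (hp s) (hpq · t)
  have hpq' : ∀ s t, p s ⬝ᵥ deriv q t = 0 := fun s t => by
    rw [dotProduct_comm]
    exact deriv_dotProduct_eq_zero_of_forall_eq (hq t) fun t' => by rw [dotProduct_comm, hpq]
  have hp'q' : ∀ s t, deriv p s ⬝ᵥ deriv q t = 0 := fun s t => by
    rw [dotProduct_comm]
    exact deriv_dotProduct_eq_zero_of_forall_eq (hq t) fun t' => by rw [dotProduct_comm, hp'q]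
  have hq0 : LinearIndependent ℝ ![q 0, deriv q 0] :=
    linearIndependent_pair_of_dotProduct (a := p 0) (by simp [hpq]) (hpq' 0 0) (hq' 0)
  have hcard := (hind.sum_elim_of_dotProduct_eq_zero hq0 fun i j => by
    fin_cases i <;> fin_cases j <;> simp [hp'q, hp'q']).fintype_card_le_finrank
  simp at hcard

open Matrix in
/-- if `p, q : ℝ → ℝ³` are differentiable with `⟨p(s), q(t)⟩ = 1` for all
`s, t`, and `p′` and `q′` never vanish, then any two derivative vectors `p′(s₁)`, `p′(s₂)`
are linearly dependent. -/
theorem stmt18 (p q : ℝ → (Fin 3 → ℝ))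
    (hp : Differentiable ℝ p) (hq : Differentiable ℝ q)
    (hpq : ∀ s t : ℝ, p s ⬝ᵥ q t = 1)
    (hp' : ∀ s : ℝ, deriv p s ≠ 0) (hq' : ∀ t : ℝ, deriv q t ≠ 0) :
    ∀ s₁ s₂ : ℝ, ¬ LinearIndependent ℝ ![deriv p s₁, deriv p s₂] :=
  stmt18_general p q hp hq hpq hq'
end
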